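/- Let X be a compact metric space, 0 < α < β ≤ 1, and Δ_j as above. Then for all f ∈ C^β(X), ‖Δ_j·(1⊗f − f⊗1)‖_{C^α(X×X)} ≲ ‖f‖_{C^β(X)} · j^{−γ} where γ = min(1 − α/β, β − α) > 0. In particular Δ_j·(1⊗f − f⊗1) → 0 in C^α(X×X) as j → ∞, uniformly on bounded subsets of C^β(X). -/

import Mathlib

set_option maxHeartbeats 1000000

/-- Key estimate: for `0 < α < β ≤ 1` and the diagonal approximants
`Δ_j(x,y) = χ(j·d(x,y))`, one has
`‖Δ_j·(1⊗f - f⊗1)‖_{C^α(X×X)} ≤ K·‖f‖_{C^β}·j^{-γ}` with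
`γ = min(1 - α/β, β - α) > 0`, uniformly in `f`: both the sup norm and the `α`-Hölder
seminorm (for the sum metric on `X × X`) of `Δ_j·(1⊗f - f⊗1)` are `O(j^{-γ})`. -/
theorem stmt_8 {X : Type*} [MetricSpace X] [CompactSpace X]
    {α β : ℝ} (h0 : 0 < α) (hab : α < β) (hb1 : β ≤ 1)
    (χ : ℝ → ℝ) (hsmooth : ContDiff ℝ (⊤ : ℕ∞) χ) (hrange : ∀ t, χ t ∈ Set.Icc (0:ℝ) 1)
    (hone : ∃ ε > (0:ℝ), ∀ t ∈ Set.Icc (0:ℝ) ε, χ t = 1)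
    (hdec : AntitoneOn χ (Set.Ici (0:ℝ)))
    (hsupp : ∀ t ≥ (1:ℝ), χ t = 0) :
    ∃ K : ℝ, 0 ≤ K ∧ ∀ (j : ℕ), 1 ≤ j → ∀ (f : X → ℂ) (H : ℝ), 0 ≤ H →
      (∀ x, ‖f x‖ ≤ H) → (∀ x y : X, ‖f x - f y‖ ≤ H * dist x y ^ β) →
      (∀ p : X × X,
        ‖χ ((j : ℝ) * dist p.1 p.2) • (f p.2 - f p.1)‖ ≤
          K * H * (j : ℝ) ^ (-(min (1 - α / β) (β - α)))) ∧
      (∀ p q : X × X,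
        ‖χ ((j : ℝ) * dist p.1 p.2) • (f p.2 - f p.1) -
            χ ((j : ℝ) * dist q.1 q.2) • (f q.2 - f q.1)‖ ≤
          K * H * (j : ℝ) ^ (-(min (1 - α / β) (β - α))) *
            (dist p.1 q.1 + dist p.2 q.2) ^ α) := by
  have hb0 : (0:ℝ) < β := h0.trans hab
  -- since β ≤ 1, the min is β - α
  have hmin : min (1 - α / β) (β - α) = β - α := by
    refine min_eq_right ?_
    have h1 : α / β * β = α := div_mul_cancel₀ _ hb0.ne'
    have hu1 : α / β ≤ 1 := (div_le_one hb0).2 hab.le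
    nlinarith [mul_nonneg (sub_nonneg.2 hu1) (sub_nonneg.2 hb1)]
  -- Lipschitz constant for χ on [0,2]
  obtain ⟨C, hC0, hC⟩ : ∃ C : ℝ, 0 ≤ C ∧ ∀ s ∈ Set.Icc (0:ℝ) 2, ∀ t ∈ Set.Icc (0:ℝ) 2,
      |χ s - χ t| ≤ C * |s - t| := by
    obtain ⟨C, hC⟩ := isCompact_Icc.exists_bound_of_continuousOn
      (f := deriv χ) ((hsmooth.continuous_deriv (by simp)).continuousOn)
    refine ⟨max C 0, le_max_right _ _, fun s hs t ht => ?_⟩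
    simpa [Real.norm_eq_abs] using Convex.norm_image_sub_le_of_norm_deriv_le
      (fun x _ => (hsmooth.differentiable (by simp)).differentiableAt)
      (fun x hx => (hC x hx).trans (le_max_left _ _)) (convex_Icc _ _) ht hs
  -- χ is C-Lipschitz on [0,∞)
  have hlip : ∀ s t : ℝ, 0 ≤ s → 0 ≤ t → |χ s - χ t| ≤ C * |s - t| := by
    have hclamp : ∀ s : ℝ, 0 ≤ s → χ s = χ (min s 2) := by
      intro s hs
      rcases le_total s 2 with h | h
      · rw [min_eq_left h]
      · rw [min_eq_right h, hsupp s (by linarith), hsupp 2 (by norm_num)]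
    intro s t hs ht
    rw [hclamp s hs, hclamp t ht]
    calc |χ (min s 2) - χ (min t 2)| ≤ C * |min s 2 - min t 2| :=
          hC _ ⟨le_min hs (by norm_num), min_le_right _ _⟩
            _ ⟨le_min ht (by norm_num), min_le_right _ _⟩
      _ ≤ C * |s - t| := by
          refine mul_le_mul_of_nonneg_left ?_ hC0
          rw [abs_le]
          rcases le_total s 2 with h1 | h1 <;> rcases le_total t 2 with h2 | h2 <;>
            simp only [min_eq_left, min_eq_right, h1, h2] <;>
            constructor <;>
            cases abs_cases (s - t) <;> nlinarith [min_le_left s 2, min_le_left t 2,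
              le_min hs (by norm_num : (0:ℝ) ≤ 2), le_min ht (by norm_num : (0:ℝ) ≤ 2)]
  have hχ01 : ∀ t, |χ t| ≤ 1 := by
    intro t
    rcases hrange t with ⟨h1, h2⟩
    rw [abs_le]; constructor <;> linarith
  refine ⟨3 + 2 * C, by linarith, fun j hj f H hH hHsup hHol => ?_⟩
  set jr : ℝ := (j : ℝ) with hjr
  have hj1 : (1:ℝ) ≤ jr := by rw [hjr]; exact_mod_cast hj
  have hj0 : (0:ℝ) < jr := lt_of_lt_of_le one_pos hj1
  simp only [hmin]
  have hγ : 0 < β - α := by linarith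
  -- sup bound : ‖g p‖ ≤ H * jr ^ (-β)
  have hsup : ∀ p : X × X, ‖χ (jr * dist p.1 p.2) • (f p.2 - f p.1)‖ ≤ H * jr ^ (-β) := by
    intro p
    by_cases hd : jr * dist p.1 p.2 < 1
    · have hd' : dist p.1 p.2 ≤ jr⁻¹ := by
        rw [← one_div]; rw [le_div_iff₀ hj0]; nlinarith [dist_nonneg (x := p.1) (y := p.2)]
      have h1 : ‖f p.2 - f p.1‖ ≤ H * jr ^ (-β) := by
        calc ‖f p.2 - f p.1‖ ≤ H * dist p.2 p.1 ^ β := hHol _ _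
          _ ≤ H * (jr⁻¹) ^ β := by
              refine mul_le_mul_of_nonneg_left ?_ hH
              exact Real.rpow_le_rpow dist_nonneg (by rwa [dist_comm]) hb0.le
          _ = H * jr ^ (-β) := by rw [Real.inv_rpow hj0.le, ← Real.rpow_neg hj0.le]
      calc ‖χ (jr * dist p.1 p.2) • (f p.2 - f p.1)‖
          = |χ (jr * dist p.1 p.2)| * ‖f p.2 - f p.1‖ := by rw [norm_smul, Real.norm_eq_abs]
        _ ≤ 1 * (H * jr ^ (-β)) := mul_le_mul (hχ01 _) h1 (norm_nonneg _) zero_le_one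
        _ = H * jr ^ (-β) := one_mul _
    · push_neg at hd
      rw [hsupp _ hd, zero_smul, norm_zero]
      positivity
  -- sup bound with the weaker exponent
  have hexp : jr ^ (-β) ≤ jr ^ (-(β - α)) :=
    Real.rpow_le_rpow_of_exponent_le hj1 (by linarith)
  have hsup' : ∀ p : X × X,
      ‖χ (jr * dist p.1 p.2) • (f p.2 - f p.1)‖ ≤ H * jr ^ (-(β - α)) := fun p =>
    (hsup p).trans (mul_le_mul_of_nonneg_left hexp hH)
  have hrpow_pos : (0:ℝ) < jr ^ (-(β - α)) := Real.rpow_pos_of_pos hj0 _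
  constructor
  · intro p
    calc ‖χ (jr * dist p.1 p.2) • (f p.2 - f p.1)‖ ≤ H * jr ^ (-(β - α)) := hsup' p
      _ ≤ (3 + 2 * C) * H * jr ^ (-(β - α)) := by
          nlinarith [mul_nonneg hH hrpow_pos.le]
  · intro p q
    set D : ℝ := dist p.1 q.1 + dist p.2 q.2 with hD
    have hD0 : 0 ≤ D := add_nonneg dist_nonneg dist_nonneg
    rcases hD0.eq_or_lt with hD0' | hD0'
    · -- D = 0 : p = q
      have h1 : p.1 = q.1 := by
        have : dist p.1 q.1 = 0 := by
          have := dist_nonneg (x := p.1) (y := q.1)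
          have := dist_nonneg (x := p.2) (y := q.2)
          linarith [hD0'.symm]
        exact dist_eq_zero.mp this
      have h2 : p.2 = q.2 := by
        have : dist p.2 q.2 = 0 := by
          have := dist_nonneg (x := p.1) (y := q.1)
          have := dist_nonneg (x := p.2) (y := q.2)
          linarith [hD0'.symm]
        exact dist_eq_zero.mp this
      rw [h1, h2, sub_self, norm_zero, ← hD0', Real.zero_rpow h0.ne', mul_zero]
    · -- 0 < D
      rcases le_or_gt 1 (jr * D) with hjD | hjD
      · -- far case: jr * D ≥ 1, use the sup bound twice
        have hinv : jr⁻¹ ≤ D := by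
          rw [← one_div, div_le_iff₀ hj0]; linarith [hjD, mul_comm jr D]
        have hDα : jr ^ (-α) ≤ D ^ α := by
          calc jr ^ (-α) = (jr⁻¹) ^ α := by
                rw [Real.inv_rpow hj0.le, ← Real.rpow_neg hj0.le]
            _ ≤ D ^ α := Real.rpow_le_rpow (inv_nonneg.2 hj0.le) hinv h0.le
        have e1 : jr ^ (-β) = jr ^ (-(β - α)) * jr ^ (-α) := by
          rw [← Real.rpow_add hj0]; congr 1; ring
        calc ‖χ (jr * dist p.1 p.2) • (f p.2 - f p.1) -
              χ (jr * dist q.1 q.2) • (f q.2 - f q.1)‖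
            ≤ ‖χ (jr * dist p.1 p.2) • (f p.2 - f p.1)‖ +
              ‖χ (jr * dist q.1 q.2) • (f q.2 - f q.1)‖ := norm_sub_le _ _
          _ ≤ H * jr ^ (-β) + H * jr ^ (-β) := add_le_add (hsup p) (hsup q)
          _ ≤ (3 + 2 * C) * H * jr ^ (-(β - α)) * D ^ α := by
              rw [e1]
              nlinarith [mul_le_mul_of_nonneg_left hDα (mul_nonneg hH hrpow_pos.le),
                mul_nonneg (mul_nonneg hH hrpow_pos.le) (Real.rpow_nonneg hD0 α),
                mul_nonneg hC0
                  (mul_nonneg (mul_nonneg hH hrpow_pos.le) (Real.rpow_nonneg hD0 α))]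
      · -- near case: jr * D < 1
        have hD_le : D ≤ jr⁻¹ := by rw [← one_div, le_div_iff₀ hj0]; linarith
        by_cases hz : 1 ≤ jr * dist p.1 p.2 ∧ 1 ≤ jr * dist q.1 q.2
        · rw [hsupp _ hz.1, hsupp _ hz.2, zero_smul, zero_smul, sub_self, norm_zero]
          positivity
        · push_neg at hz
          -- triangle inequalities
          have htri1 : dist q.1 q.2 ≤ dist p.1 p.2 + D := by
            calc dist q.1 q.2 ≤ dist q.1 p.1 + dist p.1 p.2 + dist p.2 q.2 :=
                  dist_triangle4 _ _ _ _
              _ = dist p.1 p.2 + D := by rw [dist_comm q.1 p.1, hD]; ring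
          have htri2 : dist p.1 p.2 ≤ dist q.1 q.2 + D := by
            calc dist p.1 p.2 ≤ dist p.1 q.1 + dist q.1 q.2 + dist q.2 p.2 :=
                  dist_triangle4 _ _ _ _
              _ = dist q.1 q.2 + D := by rw [dist_comm q.2 p.2, hD]; ring
          have hdq2 : dist q.1 q.2 ≤ 2 * jr⁻¹ := by
            rcases lt_or_ge (jr * dist p.1 p.2) 1 with h | h
            · have hp' : dist p.1 p.2 ≤ jr⁻¹ := by
                rw [← one_div, le_div_iff₀ hj0]; nlinarith [dist_nonneg (x := p.1) (y := p.2)]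
              linarith
            · have hq' : dist q.1 q.2 ≤ jr⁻¹ := by
                rw [← one_div, le_div_iff₀ hj0]
                nlinarith [dist_nonneg (x := q.1) (y := q.2), hz h]
              have : (0:ℝ) ≤ jr⁻¹ := inv_nonneg.2 hj0.le
              linarith
          -- algebraic decomposition
          have hdecomp : χ (jr * dist p.1 p.2) • (f p.2 - f p.1) -
                χ (jr * dist q.1 q.2) • (f q.2 - f q.1) =
              χ (jr * dist p.1 p.2) • ((f p.2 - f p.1) - (f q.2 - f q.1)) +
                (χ (jr * dist p.1 p.2) - χ (jr * dist q.1 q.2)) • (f q.2 - f q.1) := by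
            simp only [smul_sub, sub_smul]; abel
          -- bound A
          have hA : ‖(f p.2 - f p.1) - (f q.2 - f q.1)‖ ≤ 2 * (H * D ^ β) := by
            calc ‖(f p.2 - f p.1) - (f q.2 - f q.1)‖
                = ‖(f p.2 - f q.2) + (f q.1 - f p.1)‖ := by ring_nf
              _ ≤ ‖f p.2 - f q.2‖ + ‖f q.1 - f p.1‖ := norm_add_le _ _
              _ ≤ H * dist p.2 q.2 ^ β + H * dist q.1 p.1 ^ β :=
                  add_le_add (hHol _ _) (hHol _ _)
              _ ≤ H * D ^ β + H * D ^ β := by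
                  have h1 : dist p.2 q.2 ≤ D := by
                    rw [hD]; nlinarith [dist_nonneg (x := p.1) (y := q.1)]
                  have h2 : dist q.1 p.1 ≤ D := by
                    rw [hD, dist_comm q.1 p.1]; nlinarith [dist_nonneg (x := p.2) (y := q.2)]
                  exact add_le_add
                    (mul_le_mul_of_nonneg_left (Real.rpow_le_rpow dist_nonneg h1 hb0.le) hH)
                    (mul_le_mul_of_nonneg_left (Real.rpow_le_rpow dist_nonneg h2 hb0.le) hH)
              _ = 2 * (H * D ^ β) := by ring
          -- bound B
          have hB1 : |χ (jr * dist p.1 p.2) - χ (jr * dist q.1 q.2)| ≤ C * (jr * D) := by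
            have h1 := hlip (jr * dist p.1 p.2) (jr * dist q.1 q.2)
              (mul_nonneg hj0.le dist_nonneg) (mul_nonneg hj0.le dist_nonneg)
            have h2 : |jr * dist p.1 p.2 - jr * dist q.1 q.2| ≤ jr * D := by
              rw [← mul_sub, abs_mul, abs_of_pos hj0]
              refine mul_le_mul_of_nonneg_left ?_ hj0.le
              rw [abs_sub_le_iff]
              constructor <;> linarith
            exact h1.trans (mul_le_mul_of_nonneg_left h2 hC0)
          have hB2 : ‖f q.2 - f q.1‖ ≤ H * dist q.1 q.2 ^ β := by
            rw [dist_comm q.1 q.2]; exact hHol _ _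
          -- power facts
          have hinvpow : ∀ c : ℝ, (jr⁻¹) ^ c = jr ^ (-c) := fun c => by
            rw [Real.inv_rpow hj0.le, ← Real.rpow_neg hj0.le]
          have e_fact1 : D ^ β ≤ jr ^ (-(β - α)) * D ^ α := by
            have hsplit : D ^ β = D ^ (β - α) * D ^ α := by
              rw [← Real.rpow_add hD0']; congr 1; ring
            have hle : D ^ (β - α) ≤ jr ^ (-(β - α)) := by
              calc D ^ (β - α) ≤ (jr⁻¹) ^ (β - α) :=
                    Real.rpow_le_rpow hD0 hD_le hγ.le
                _ = jr ^ (-(β - α)) := hinvpow _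
            rw [hsplit]
            exact mul_le_mul_of_nonneg_right hle (Real.rpow_nonneg hD0 α)
          have e_fact2 : jr * D * dist q.1 q.2 ^ β ≤ 2 * (jr ^ (-(β - α)) * D ^ α) := by
            have hq : dist q.1 q.2 ^ β ≤ 2 * jr ^ (-β) := by
              calc dist q.1 q.2 ^ β ≤ (2 * jr⁻¹) ^ β :=
                    Real.rpow_le_rpow dist_nonneg hdq2 hb0.le
                _ = (2:ℝ) ^ β * (jr⁻¹) ^ β :=
                    Real.mul_rpow (by norm_num) (inv_nonneg.2 hj0.le)
                _ ≤ 2 * jr ^ (-β) := by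
                    rw [hinvpow]
                    refine mul_le_mul_of_nonneg_right ?_ (Real.rpow_nonneg hj0.le _)
                    calc (2:ℝ) ^ β ≤ (2:ℝ) ^ (1:ℝ) :=
                          Real.rpow_le_rpow_of_exponent_le one_le_two hb1
                      _ = 2 := Real.rpow_one 2
            have hjj : jr * jr ^ (-β) = jr ^ (1 - β) := by
              rw [show (1:ℝ) - β = 1 + -β from by ring, Real.rpow_add hj0, Real.rpow_one]
            have hDsplit : D = D ^ (1 - α) * D ^ α := by
              rw [← Real.rpow_add hD0', show (1:ℝ) - α + α = 1 from by ring, Real.rpow_one]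
            have hD1α : D ^ (1 - α) ≤ jr ^ (α - 1) := by
              calc D ^ (1 - α) ≤ (jr⁻¹) ^ (1 - α) :=
                    Real.rpow_le_rpow hD0 hD_le (by linarith)
                _ = jr ^ (α - 1) := by
                    rw [hinvpow, show -(1 - α) = α - 1 from by ring]
            have hpow : jr ^ (1 - β) * jr ^ (α - 1) = jr ^ (-(β - α)) := by
              rw [← Real.rpow_add hj0, show (1 - β) + (α - 1) = -(β - α) from by ring]
            calc jr * D * dist q.1 q.2 ^ β
                ≤ jr * D * (2 * jr ^ (-β)) :=
                  mul_le_mul_of_nonneg_left hq (mul_nonneg hj0.le hD0)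
              _ = 2 * jr ^ (1 - β) * D := by
                  rw [show jr * D * (2 * jr ^ (-β)) = 2 * (jr * jr ^ (-β)) * D from by ring, hjj]
              _ ≤ 2 * jr ^ (1 - β) * (jr ^ (α - 1) * D ^ α) := by
                  have h := mul_le_mul_of_nonneg_right hD1α (Real.rpow_nonneg hD0 α)
                  calc 2 * jr ^ (1 - β) * D
                      = 2 * jr ^ (1 - β) * (D ^ (1 - α) * D ^ α) := by
                        conv_lhs => rw [hDsplit]
                    _ ≤ 2 * jr ^ (1 - β) * (jr ^ (α - 1) * D ^ α) := by
                        refine mul_le_mul_of_nonneg_left h ?_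
                        positivity
              _ = 2 * (jr ^ (-(β - α)) * D ^ α) := by
                  rw [show 2 * jr ^ (1 - β) * (jr ^ (α - 1) * D ^ α) =
                    2 * (jr ^ (1 - β) * jr ^ (α - 1) * D ^ α) from by ring, hpow]
          -- assemble
          calc ‖χ (jr * dist p.1 p.2) • (f p.2 - f p.1) -
                χ (jr * dist q.1 q.2) • (f q.2 - f q.1)‖
              = ‖χ (jr * dist p.1 p.2) • ((f p.2 - f p.1) - (f q.2 - f q.1)) +
                  (χ (jr * dist p.1 p.2) - χ (jr * dist q.1 q.2)) • (f q.2 - f q.1)‖ := by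
                rw [hdecomp]
            _ ≤ ‖χ (jr * dist p.1 p.2) • ((f p.2 - f p.1) - (f q.2 - f q.1))‖ +
                ‖(χ (jr * dist p.1 p.2) - χ (jr * dist q.1 q.2)) • (f q.2 - f q.1)‖ :=
                norm_add_le _ _
            _ = |χ (jr * dist p.1 p.2)| * ‖(f p.2 - f p.1) - (f q.2 - f q.1)‖ +
                |χ (jr * dist p.1 p.2) - χ (jr * dist q.1 q.2)| * ‖f q.2 - f q.1‖ := by
                rw [norm_smul, norm_smul, Real.norm_eq_abs, Real.norm_eq_abs]
            _ ≤ 1 * (2 * (H * D ^ β)) + (C * (jr * D)) * (H * dist q.1 q.2 ^ β) :=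
                add_le_add (mul_le_mul (hχ01 _) hA (norm_nonneg _) zero_le_one)
                  (mul_le_mul hB1 hB2 (norm_nonneg _)
                    (mul_nonneg hC0 (mul_nonneg hj0.le hD0)))
            _ ≤ (3 + 2 * C) * H * jr ^ (-(β - α)) * D ^ α := by
                have m1 : H * D ^ β ≤ H * (jr ^ (-(β - α)) * D ^ α) :=
                  mul_le_mul_of_nonneg_left e_fact1 hH
                have m2 : C * H * (jr * D * dist q.1 q.2 ^ β) ≤
                    C * H * (2 * (jr ^ (-(β - α)) * D ^ α)) :=
                  mul_le_mul_of_nonneg_left e_fact2 (mul_nonneg hC0 hH)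
                nlinarith [mul_nonneg hH (mul_nonneg hrpow_pos.le (Real.rpow_nonneg hD0 α)),
                  mul_nonneg hC0
                    (mul_nonneg hH (mul_nonneg hrpow_pos.le (Real.rpow_nonneg hD0 α)))]
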